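/- Projections of sequential compositions of typable g-choreographies: suppose Π1 ⊢ G1 : ⟨φ1,Λ1⟩ and Π2 ⊢ G2 : ⟨φ2,Λ2⟩ are derivable for ground g-choreographies G1, G2. Then for every participant A ∈ Π1 ∪ Π2: the labels of the minimal events of ⟦G1;G2⟧↾A equal the labels of the minimal events of ⟦G1⟧↾A if A ∈ Π1, and equal the labels of the minimal events of ⟦G2⟧↾A otherwise; dually, the labels of the maximal events of ⟦G1;G2⟧↾A equal the labels of the maximal events of ⟦G2⟧↾A if A ∈ Π2, and equal the labels of the maximal events of ⟦G1⟧↾A otherwise. -/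

import Mathlib

/-!
For a typable `G`, `⟦G⟧` is defined and satisfies the invariant `WellTyped ⟦G⟧ Π φ`: it is
finite, its conflict is irreflexive, symmetric and hereditary, all subjects lie in `Π`, every
maximal configuration contains an event of each participant of `Π`, and the minimal labels of
`⟦G⟧↾A` are `φ̂(A)`. The last clause turns `compch` into well-branchedness, so choices are
defined. The invariant survives `;`, `|` and `+` because in such an event structure the maximal
configurations are exactly the configurations in conflict with every event outside them, and this
saturation restricts to the components (for `;`: to the left part of a maximal configuration and
to the copy of `⟦G2⟧` attached to it).

Given the invariant, in `⟦G1;G2⟧` every `A`-event of a copy of `⟦G2⟧` lies above an `A`-event of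
its base configuration when `A ∈ Π1`, so the minimal `A`-events are those of `⟦G1⟧`; when
`A ∉ Π1`, all `A`-events lie in copies of `⟦G2⟧`. Dually, every event of `⟦G1⟧` belongs to a
maximal configuration, so for `A ∈ Π2` each of its `A`-events lies below an `A`-event of a copy.
Copies over distinct maximal configurations are told apart by `encSet`, which is injective only on
finite sets; this is why finiteness is part of the invariant.
-/

open scoped Classical

namespace Choreo

/-! ## Labels -/

/-- Communication labels: output `A B!m` and input `A B?m`. -/
inductive Label (P M : Type) where
  | out : P → P → M → Label P M
  | inp : P → P → M → Label P M

variable {P M : Type}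

/-- The subject of a label: the sender of an output, the receiver of an input. -/
def Label.sbj : Label P M → P
  | .out a _ _ => a
  | .inp _ b _ => b

/-- The set `L^!` of output labels (sender and receiver distinct). -/
def Lout : Set (Label P M) := {l | ∃ a b m, a ≠ b ∧ l = .out a b m}

/-- The set `L^?` of input labels (sender and receiver distinct). -/
def Lin : Set (Label P M) := {l | ∃ a b m, a ≠ b ∧ l = .inp a b m}

/-- `L̂(A)`: the labels in `L` whose subject is `A`. -/
def hat (L : Set (Label P M)) (A : P) : Set (Label P M) := {l ∈ L | l.sbj = A}

/-- `sbj(L)`: the set of subjects of the labels in `L`. -/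
def sbjSet (L : Set (Label P M)) : Set P := Label.sbj '' L

/-- `L − Π`: the labels in `L` whose subject is not in `Π`. -/
def lminus (L : Set (Label P M)) (Γ : Set P) : Set (Label P M) := {l ∈ L | l.sbj ∉ Γ}

/-! ## Labelled event structures (events drawn from ℕ) -/

/-- Data of a labelled (prime) event structure over events drawn from `ℕ`. -/
structure ES (P M : Type) where
  ev : Set ℕ
  le : ℕ → ℕ → Prop
  conf : ℕ → ℕ → Prop
  lbl : ℕ → Label P M

namespace ES

variable (E : ES P M)

/-- Configurations: downward-closed conflict-free sets of events. -/
def Config (x : Set ℕ) : Prop :=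
  x ⊆ E.ev ∧ (∀ e ∈ x, ∀ f ∈ E.ev, E.le f e → f ∈ x) ∧
    ∀ e ∈ x, ∀ f ∈ x, ¬ E.conf e f

/-- `MaxC E`: the ⊆-maximal configurations of `E`. -/
def MaxC : Set (Set ℕ) := {x | E.Config x ∧ ∀ y, E.Config y → x ⊆ y → y = x}

/-- Minimal events of `s ⊆ E.ev` with respect to `E.le`. -/
def minIn (s : Set ℕ) : Set ℕ := {e ∈ s | ∀ f ∈ s, E.le f e → f = e}

/-- Maximal events of `s ⊆ E.ev` with respect to `E.le`. -/
def maxIn (s : Set ℕ) : Set ℕ := {e ∈ s | ∀ f ∈ s, E.le e f → f = e}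

def minEv : Set ℕ := E.minIn E.ev
def maxEv : Set ℕ := E.maxIn E.ev

/-- Labels of the minimal events of `E`. -/
def minLbl : Set (Label P M) := E.lbl '' E.minEv

/-- Labels of the maximal events of `E`. -/
def maxLbl : Set (Label P M) := E.lbl '' E.maxEv

/-- All labels occurring in `E`. -/
def lblSet : Set (Label P M) := E.lbl '' E.ev

/-- The projection `E↾A`: the restriction of `E` to the events whose label has subject `A`. -/
def proj (A : P) : ES P M where
  ev := {e ∈ E.ev | (E.lbl e).sbj = A}
  le u v := E.le u v ∧ (u ∈ E.ev ∧ (E.lbl u).sbj = A) ∧ (v ∈ E.ev ∧ (E.lbl v).sbj = A)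
  conf u v := E.conf u v ∧ (u ∈ E.ev ∧ (E.lbl u).sbj = A) ∧ (v ∈ E.ev ∧ (E.lbl v).sbj = A)
  lbl := E.lbl

/-- The projection `x↾A` of a configuration (as a set of events of `E`). -/
def projC (x : Set ℕ) (A : P) : Set ℕ := {e ∈ x | (E.lbl e).sbj = A}

end ES

/-! ## Constructions on event structures -/

/-- Tag for the events of a left component. -/
def tagL (e : ℕ) : ℕ := Nat.pair 0 e
/-- Tag for the events of a right component. -/
def tagR (e : ℕ) : ℕ := Nat.pair 1 e
/-- Tag for the events of the copy of the second component indexed by (the code of) a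
maximal configuration of the first one. -/
def tagC (k e : ℕ) : ℕ := Nat.pair 1 (Nat.pair k e)

/-- A code (injective on finite sets) of sets of naturals. -/
noncomputable def encSet (x : Set ℕ) : ℕ :=
  if h : x.Finite then h.toFinset.sum (fun n => 2 ^ n) else 0

/-- The empty event structure `ε`. -/
noncomputable def esEmpty [Nonempty P] [Nonempty M] : ES P M where
  ev := ∅
  le _ _ := False
  conf _ _ := False
  lbl _ := Label.out Classical.ofNonempty Classical.ofNonempty Classical.ofNonempty

/-- `⟦A→B:m⟧`: two ordered events labelled `A B!m < A B?m`. -/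
def esAct (a b : P) (m : M) : ES P M where
  ev := {0, 1}
  le u v := (u = 0 ∧ v = 0) ∨ (u = 0 ∧ v = 1) ∨ (u = 1 ∧ v = 1)
  conf _ _ := False
  lbl e := if e = 0 then Label.out a b m else Label.inp a b m

/-- Tensor product `E1 ⊗ E2` (componentwise disjoint union). -/
def esTensor (E1 E2 : ES P M) : ES P M where
  ev := (tagL '' E1.ev) ∪ (tagR '' E2.ev)
  le u v := (∃ e ∈ E1.ev, ∃ f ∈ E1.ev, E1.le e f ∧ u = tagL e ∧ v = tagL f) ∨
            (∃ e ∈ E2.ev, ∃ f ∈ E2.ev, E2.le e f ∧ u = tagR e ∧ v = tagR f)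
  conf u v := (∃ e ∈ E1.ev, ∃ f ∈ E1.ev, E1.conf e f ∧ u = tagL e ∧ v = tagL f) ∨
              (∃ e ∈ E2.ev, ∃ f ∈ E2.ev, E2.conf e f ∧ u = tagR e ∧ v = tagR f)
  lbl u := if (Nat.unpair u).1 = 0 then E1.lbl (Nat.unpair u).2 else E2.lbl (Nat.unpair u).2

/-- Sum `E1 + E2`: disjoint union with all cross pairs of events in conflict. -/
def esSum (E1 E2 : ES P M) : ES P M :=
  { esTensor E1 E2 with
    conf := fun u v => (esTensor E1 E2).conf u v ∨
      (∃ e ∈ E1.ev, ∃ f ∈ E2.ev, (u = tagL e ∧ v = tagR f) ∨ (u = tagR f ∧ v = tagL e)) }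

/-- Sequential composition: appends to each maximal configuration `x` of `E1` a disjoint
copy of `E2`, ordering an event of `x` below an event of the copy whenever their labels
have the same subject. -/
noncomputable def esSeq (E1 E2 : ES P M) : ES P M where
  ev := (tagL '' E1.ev) ∪ {u | ∃ x ∈ E1.MaxC, ∃ e ∈ E2.ev, u = tagC (encSet x) e}
  le u v :=
    (∃ e ∈ E1.ev, ∃ f ∈ E1.ev, E1.le e f ∧ u = tagL e ∧ v = tagL f) ∨
    (∃ x ∈ E1.MaxC, ∃ e ∈ E2.ev, ∃ f ∈ E2.ev, E2.le e f ∧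
       u = tagC (encSet x) e ∧ v = tagC (encSet x) f) ∨
    (∃ x ∈ E1.MaxC, ∃ e ∈ x, ∃ f ∈ E2.ev, (E1.lbl e).sbj = (E2.lbl f).sbj ∧
       u = tagL e ∧ v = tagC (encSet x) f)
  conf u v :=
    (∃ e ∈ E1.ev, ∃ f ∈ E1.ev, E1.conf e f ∧ u = tagL e ∧ v = tagL f) ∨
    (∃ x ∈ E1.MaxC, ∃ e ∈ E2.ev, ∃ f ∈ E2.ev, E2.conf e f ∧
       u = tagC (encSet x) e ∧ v = tagC (encSet x) f) ∨
    (∃ x ∈ E1.MaxC, ∃ x' ∈ E1.MaxC, x ≠ x' ∧ ∃ e ∈ E2.ev, ∃ f ∈ E2.ev,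
       u = tagC (encSet x) e ∧ v = tagC (encSet x') f) ∨
    (∃ x ∈ E1.MaxC, ∃ e ∈ E1.ev, (∃ e' ∈ x, E1.conf e e') ∧ ∃ f ∈ E2.ev,
       ((u = tagL e ∧ v = tagC (encSet x) f) ∨ (u = tagC (encSet x) f ∧ v = tagL e)))
  lbl u := if (Nat.unpair u).1 = 0 then E1.lbl (Nat.unpair u).2
           else E2.lbl (Nat.unpair (Nat.unpair u).2).2

/-! ## Well-branchedness -/

/-- Labels of the minimal events of the projection `E↾A`. -/
def minLblP (E : ES P M) (A : P) : Set (Label P M) := (E.proj A).minLbl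

/-- `A` is active for the branches `E1`, `E2`. -/
def active (E1 E2 : ES P M) (A : P) : Prop :=
  minLblP E1 A ≠ ∅ ∧ minLblP E2 A ≠ ∅ ∧
  Disjoint (minLblP E1 A) (minLblP E2 A) ∧
  minLblP E1 A ∪ minLblP E2 A ⊆ Lout

/-- `B` is passive for the branches `E1`, `E2`. -/
def passive (E1 E2 : ES P M) (B : P) : Prop :=
  Disjoint (minLblP E1 B) (minLblP E2 B) ∧
  minLblP E1 B ∪ minLblP E2 B ⊆ Lin ∧
  (minLblP E1 B = ∅ ↔ minLblP E2 B = ∅)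

/-- Well-branchedness: a unique active participant, all other participants passive. -/
def wb (E1 E2 : ES P M) : Prop :=
  ∃ A, active E1 E2 A ∧ (∀ A', active E1 E2 A' → A' = A) ∧
    ∀ B, B ≠ A → passive E1 E2 B

/-! ## Ground g-choreographies and their semantics -/

/-- Ground g-choreographies: `G ::= 0 | A→B:m | G;G | G|G | G+G`. -/
inductive GC (P M : Type) where
  | nil : GC P M
  | act : P → P → M → GC P M
  | seq : GC P M → GC P M → GC P M
  | par : GC P M → GC P M → GC P M
  | cho : GC P M → GC P M → GC P M

/-- `P(G)`: the participants occurring in `G`. -/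
def parts : GC P M → Set P
  | .nil => ∅
  | .act a b _ => {a, b}
  | .seq g1 g2 => parts g1 ∪ parts g2
  | .par g1 g2 => parts g1 ∪ parts g2
  | .cho g1 g2 => parts g1 ∪ parts g2

/-- The semantics `⟦G⟧`: a labelled event structure, or `none` (i.e. `⊥`) when a side
condition fails (the grammar requires `A ≠ B` in interactions; parallel requires disjoint
label sets; choice requires well-branchedness). -/
noncomputable def gsem [Nonempty P] [Nonempty M] : GC P M → Option (ES P M)
  | .nil => some esEmpty
  | .act a b m => if a = b then none else some (esAct a b m)
  | .seq g1 g2 =>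
      match gsem g1, gsem g2 with
      | some E1, some E2 => some (esSeq E1 E2)
      | _, _ => none
  | .par g1 g2 =>
      match gsem g1, gsem g2 with
      | some E1, some E2 =>
          if Disjoint E1.lblSet E2.lblSet then some (esTensor E1 E2) else none
      | _, _ => none
  | .cho g1 g2 =>
      match gsem g1, gsem g2 with
      | some E1, some E2 => if wb E1 E2 then some (esSum E1 E2) else none
      | _, _ => none

/-! ## The typing system -/

/-- Output uniform sets of labels. -/
def outUniform (U V : Set (Label P M)) : Prop := Disjoint U V ∧ U ∪ V ⊆ Lout

/-- Input uniform sets of labels. -/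
def inUniform (U V : Set (Label P M)) : Prop := Disjoint U V ∧ U ∪ V ⊆ Lin

/-- The compatibility condition `compch(φ1,φ2,Π)` of rule t-ch. -/
def compch (φ1 φ2 : Set (Label P M)) (Γ : Set P) : Prop :=
  ∃ A ∈ Γ,
    (outUniform (hat φ1 A) (hat φ2 A) ∧ hat φ1 A ≠ ∅ ∧ hat φ2 A ≠ ∅) ∧
    (∀ A' ∈ Γ, (outUniform (hat φ1 A') (hat φ2 A') ∧ hat φ1 A' ≠ ∅ ∧ hat φ2 A' ≠ ∅) →
        A' = A) ∧
    ∀ B ∈ Γ, B ≠ A →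
      inUniform (hat φ1 B) (hat φ2 B) ∧ (hat φ1 B = ∅ ↔ hat φ2 B = ∅)

/-- The typing judgement `Π ⊢ G : ⟨φ,Λ⟩`. -/
inductive Typing : Set P → GC P M → Set (Label P M) → Set (Label P M) → Prop where
  | temp : Typing ∅ GC.nil ∅ ∅
  | tint {a b : P} {m : M} (hab : a ≠ b) :
      Typing {a, b} (GC.act a b m)
        {Label.out a b m, Label.inp a b m} {Label.out a b m, Label.inp a b m}
  | tseq {Γ1 Γ2 : Set P} {g1 g2 : GC P M} {φ1 φ2 Λ1 Λ2 : Set (Label P M)} :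
      Typing Γ1 g1 φ1 Λ1 → Typing Γ2 g2 φ2 Λ2 →
      Typing (Γ1 ∪ Γ2) (GC.seq g1 g2) (φ1 ∪ lminus φ2 Γ1) (Λ2 ∪ lminus Λ1 Γ2)
  | tpar {Γ1 Γ2 : Set P} {g1 g2 : GC P M} {φ1 φ2 Λ1 Λ2 : Set (Label P M)} :
      Typing Γ1 g1 φ1 Λ1 → Typing Γ2 g2 φ2 Λ2 → Γ1 ∩ Γ2 = ∅ →
      Typing (Γ1 ∪ Γ2) (GC.par g1 g2) (φ1 ∪ φ2) (Λ1 ∪ Λ2)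
  | tch {Γ : Set P} {g1 g2 : GC P M} {φ1 φ2 Λ1 Λ2 : Set (Label P M)} :
      Typing Γ g1 φ1 Λ1 → Typing Γ g2 φ2 Λ2 → compch φ1 φ2 Γ →
      Typing Γ (GC.cho g1 g2) (φ1 ∪ φ2) (Λ1 ∪ Λ2)


/-! ## One-hole contexts and their typing (hole axiom `Γh ⊢ [·] : ⟨φh,Λh⟩`) -/

/-- g-choreography contexts with a single hole. -/
inductive Ctx (P M : Type) where
  | hole : Ctx P M
  | seqL : Ctx P M → GC P M → Ctx P M
  | seqR : GC P M → Ctx P M → Ctx P M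
  | parL : Ctx P M → GC P M → Ctx P M
  | parR : GC P M → Ctx P M → Ctx P M
  | choL : Ctx P M → GC P M → Ctx P M
  | choR : GC P M → Ctx P M → Ctx P M

/-- `C.fill g = C[g]`, the replacement of the hole of `C` by `g`. -/
def Ctx.fill : Ctx P M → GC P M → GC P M
  | .hole, g => g
  | .seqL c g2, g => GC.seq (c.fill g) g2
  | .seqR g1 c, g => GC.seq g1 (c.fill g)
  | .parL c g2, g => GC.par (c.fill g) g2
  | .parR g1 c, g => GC.par g1 (c.fill g)
  | .choL c g2, g => GC.cho (c.fill g) g2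
  | .choR g1 c, g => GC.cho g1 (c.fill g)

/-- Typing of one-hole contexts in the type system extended with the axiom
`Γh ⊢ [·] : ⟨φh,Λh⟩` for the hole. -/
inductive CTyping (Γh : Set P) (φh Λh : Set (Label P M)) :
    Set P → Ctx P M → Set (Label P M) → Set (Label P M) → Prop where
  | hole : CTyping Γh φh Λh Γh Ctx.hole φh Λh
  | seqL {Γ1 Γ2 : Set P} {c : Ctx P M} {g : GC P M} {φ1 φ2 Λ1 Λ2 : Set (Label P M)} :
      CTyping Γh φh Λh Γ1 c φ1 Λ1 → Typing Γ2 g φ2 Λ2 →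
      CTyping Γh φh Λh (Γ1 ∪ Γ2) (Ctx.seqL c g) (φ1 ∪ lminus φ2 Γ1) (Λ2 ∪ lminus Λ1 Γ2)
  | seqR {Γ1 Γ2 : Set P} {g : GC P M} {c : Ctx P M} {φ1 φ2 Λ1 Λ2 : Set (Label P M)} :
      Typing Γ1 g φ1 Λ1 → CTyping Γh φh Λh Γ2 c φ2 Λ2 →
      CTyping Γh φh Λh (Γ1 ∪ Γ2) (Ctx.seqR g c) (φ1 ∪ lminus φ2 Γ1) (Λ2 ∪ lminus Λ1 Γ2)
  | parL {Γ1 Γ2 : Set P} {c : Ctx P M} {g : GC P M} {φ1 φ2 Λ1 Λ2 : Set (Label P M)} :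
      CTyping Γh φh Λh Γ1 c φ1 Λ1 → Typing Γ2 g φ2 Λ2 → Γ1 ∩ Γ2 = ∅ →
      CTyping Γh φh Λh (Γ1 ∪ Γ2) (Ctx.parL c g) (φ1 ∪ φ2) (Λ1 ∪ Λ2)
  | parR {Γ1 Γ2 : Set P} {g : GC P M} {c : Ctx P M} {φ1 φ2 Λ1 Λ2 : Set (Label P M)} :
      Typing Γ1 g φ1 Λ1 → CTyping Γh φh Λh Γ2 c φ2 Λ2 → Γ1 ∩ Γ2 = ∅ →
      CTyping Γh φh Λh (Γ1 ∪ Γ2) (Ctx.parR g c) (φ1 ∪ φ2) (Λ1 ∪ Λ2)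
  | choL {Γ : Set P} {c : Ctx P M} {g : GC P M} {φ1 φ2 Λ1 Λ2 : Set (Label P M)} :
      CTyping Γh φh Λh Γ c φ1 Λ1 → Typing Γ g φ2 Λ2 → compch φ1 φ2 Γ →
      CTyping Γh φh Λh Γ (Ctx.choL c g) (φ1 ∪ φ2) (Λ1 ∪ Λ2)
  | choR {Γ : Set P} {g : GC P M} {c : Ctx P M} {φ1 φ2 Λ1 Λ2 : Set (Label P M)} :
      Typing Γ g φ1 Λ1 → CTyping Γh φh Λh Γ c φ2 Λ2 → compch φ1 φ2 Γ →
      CTyping Γh φh Λh Γ (Ctx.choR g c) (φ1 ∪ φ2) (Λ1 ∪ Λ2)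

/-! ## Refinable actions, t-ref, and refinement -/

/-- The three side conditions of the axiom schema t-ref for the refinable action
`A → m1…mn : B1,…,Bn`, represented by the initiator `A` and the nonempty list
`l = [(m1,B1),…,(mn,Bn)]` with pairwise distinct `Bi`. -/
def trefCond (Γ : Set P) (φ Λ : Set (Label P M)) (A : P) (l : List (M × P)) : Prop :=
  l ≠ [] ∧ (l.map Prod.snd).Nodup ∧
  sbjSet φ = Γ ∧ sbjSet Λ = Γ ∧ sbjSet (φ ∩ Lout) = {A} ∧
  ∀ p ∈ l, ∃ C ∈ Γ, hat Λ p.2 = {Label.inp C p.2 p.1}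

/-- `G ref A→m1…mn:B1,…,Bn`: the ground g-choreography `G` refines the refinable action
given by initiator `A` and list `l = [(m1,B1),…,(mn,Bn)]`. -/
def Refines [Nonempty P] [Nonempty M] (G : GC P M) (A : P) (l : List (M × P)) : Prop :=
  ∃ E : ES P M, gsem G = some E ∧
    sbjSet E.minLbl = {A} ∧
    ∀ x ∈ E.MaxC, ∀ p ∈ l, ∃ C ∈ parts G,
      Label.inp C p.2 p.1 ∈ E.lbl '' (E.maxIn (E.projC x p.2))

/-! ## Multi-hole contexts -/

/-- g-choreography contexts with (numbered) holes. -/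
inductive MCtx (P M : Type) where
  | hole : ℕ → MCtx P M
  | nil : MCtx P M
  | act : P → P → M → MCtx P M
  | seq : MCtx P M → MCtx P M → MCtx P M
  | par : MCtx P M → MCtx P M → MCtx P M
  | cho : MCtx P M → MCtx P M → MCtx P M

/-- The (indices of the) holes occurring in a multi-hole context. -/
def MCtx.holes : MCtx P M → List ℕ
  | .hole i => [i]
  | .nil => []
  | .act _ _ _ => []
  | .seq c1 c2 => c1.holes ++ c2.holes
  | .par c1 c2 => c1.holes ++ c2.holes
  | .cho c1 c2 => c1.holes ++ c2.holes

/-- `C.fill g`: replace each hole `[·]i` by `g i`. -/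
def MCtx.fill : MCtx P M → (ℕ → GC P M) → GC P M
  | .hole i, g => g i
  | .nil, _ => GC.nil
  | .act a b m, _ => GC.act a b m
  | .seq c1 c2, g => GC.seq (c1.fill g) (c2.fill g)
  | .par c1 c2, g => GC.par (c1.fill g) (c2.fill g)
  | .cho c1 c2, g => GC.cho (c1.fill g) (c2.fill g)

/-- Typing of multi-hole contexts in the extended type system, where hole `i` is typed by
the axiom `(σ i).1 ⊢ [·]i : ⟨(σ i).2.1, (σ i).2.2⟩`. -/
inductive MTyping (σ : ℕ → Set P × Set (Label P M) × Set (Label P M)) :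
    Set P → MCtx P M → Set (Label P M) → Set (Label P M) → Prop where
  | hole (i : ℕ) : MTyping σ (σ i).1 (MCtx.hole i) (σ i).2.1 (σ i).2.2
  | temp : MTyping σ ∅ MCtx.nil ∅ ∅
  | tint {a b : P} {m : M} (hab : a ≠ b) :
      MTyping σ {a, b} (MCtx.act a b m)
        {Label.out a b m, Label.inp a b m} {Label.out a b m, Label.inp a b m}
  | tseq {Γ1 Γ2 : Set P} {c1 c2 : MCtx P M} {φ1 φ2 Λ1 Λ2 : Set (Label P M)} :
      MTyping σ Γ1 c1 φ1 Λ1 → MTyping σ Γ2 c2 φ2 Λ2 →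
      MTyping σ (Γ1 ∪ Γ2) (MCtx.seq c1 c2) (φ1 ∪ lminus φ2 Γ1) (Λ2 ∪ lminus Λ1 Γ2)
  | tpar {Γ1 Γ2 : Set P} {c1 c2 : MCtx P M} {φ1 φ2 Λ1 Λ2 : Set (Label P M)} :
      MTyping σ Γ1 c1 φ1 Λ1 → MTyping σ Γ2 c2 φ2 Λ2 → Γ1 ∩ Γ2 = ∅ →
      MTyping σ (Γ1 ∪ Γ2) (MCtx.par c1 c2) (φ1 ∪ φ2) (Λ1 ∪ Λ2)
  | tch {Γ : Set P} {c1 c2 : MCtx P M} {φ1 φ2 Λ1 Λ2 : Set (Label P M)} :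
      MTyping σ Γ c1 φ1 Λ1 → MTyping σ Γ c2 φ2 Λ2 → compch φ1 φ2 Γ →
      MTyping σ Γ (MCtx.cho c1 c2) (φ1 ∪ φ2) (Λ1 ∪ Λ2)

@[simp] lemma Label.sbj_out (a b : P) (m : M) : (Label.out a b m).sbj = a := rfl

@[simp] lemma Label.sbj_inp (a b : P) (m : M) : (Label.inp a b m).sbj = b := rfl

lemma hat_union (s t : Set (Label P M)) (A : P) : hat (s ∪ t) A = hat s A ∪ hat t A :=
  Set.sep_union

lemma hat_lminus_of_mem {φ : Set (Label P M)} {Γ : Set P} {A : P} (hA : A ∈ Γ) :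
    hat (lminus φ Γ) A = ∅ := by
  ext l
  simp only [hat, lminus, Set.mem_ofPred_eq, Set.mem_empty_iff_false, iff_false]
  rintro ⟨⟨-, hl⟩, rfl⟩
  exact hl hA

lemma hat_lminus_of_notMem {φ : Set (Label P M)} {Γ : Set P} {A : P} (hA : A ∉ Γ) :
    hat (lminus φ Γ) A = hat φ A := by
  ext l
  simp only [hat, lminus, Set.mem_ofPred_eq]
  grind

lemma tagL_injective : Function.Injective tagL := fun _ _ h => by
  simpa [tagL, Nat.pair_eq_pair] using h

lemma tagR_injective : Function.Injective tagR := fun _ _ h => by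
  simpa [tagR, Nat.pair_eq_pair] using h

@[simp] lemma tagL_inj {e f : ℕ} : tagL e = tagL f ↔ e = f := tagL_injective.eq_iff

@[simp] lemma tagC_inj {k e k' e' : ℕ} : tagC k e = tagC k' e' ↔ k = k' ∧ e = e' := by
  simp [tagC, Nat.pair_eq_pair]

lemma tagC_injective (k : ℕ) : Function.Injective (tagC k) := fun _ _ h => (tagC_inj.1 h).2

@[simp] lemma tagL_ne_tagR {e f : ℕ} : tagL e ≠ tagR f := by
  simp [tagL, tagR, Nat.pair_eq_pair]

@[simp] lemma tagR_ne_tagL {e f : ℕ} : tagR e ≠ tagL f := tagL_ne_tagR.symm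

@[simp] lemma tagL_ne_tagC {e k f : ℕ} : tagL e ≠ tagC k f := by
  simp [tagL, tagC, Nat.pair_eq_pair]

@[simp] lemma tagC_ne_tagL {e k f : ℕ} : tagC k f ≠ tagL e := tagL_ne_tagC.symm

lemma encSet_injOn : Set.InjOn encSet {x | x.Finite} := by
  intro x (hx : x.Finite) y (hy : y.Finite) h
  simp only [encSet, dif_pos hx, dif_pos hy] at h
  simpa using Finset.geomSum_injective le_rfl h

lemma ES.encSet_injOn_MaxC {E : ES P M} (hfin : E.ev.Finite) : Set.InjOn encSet E.MaxC :=
  encSet_injOn.mono fun _ hx => hfin.subset hx.1.1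

namespace ES

variable (E : ES P M)

structure IsPrimeConflict : Prop where
  irrefl : ∀ e, ¬ E.conf e e
  symm : ∀ {e f}, E.conf e f → E.conf f e
  hered : ∀ {e f g}, E.conf e f → E.le f g → E.conf e g

def IsSaturated (x : Set ℕ) : Prop := ∀ e ∈ E.ev, e ∉ x → ∃ f ∈ x, E.conf e f

def Involves (Γ : Set P) : Prop := ∀ x ∈ E.MaxC, ∀ A ∈ Γ, ∃ e ∈ x, (E.lbl e).sbj = A

variable {E}

lemma IsPrimeConflict.conf_of_reflTransGen (hE : E.IsPrimeConflict) {e f g : ℕ}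
    (hc : E.conf e f) (hfg : Relation.ReflTransGen E.le f g) : E.conf e g := by
  induction hfg with
  | refl => exact hc
  | tail _ hle ih => exact hE.hered ih hle

lemma IsPrimeConflict.config_union_past (hE : E.IsPrimeConflict) {x : Set ℕ} (hx : E.Config x)
    {e : ℕ} (hfree : ∀ f ∈ x, ¬ E.conf e f) :
    E.Config (x ∪ {d ∈ E.ev | Relation.ReflTransGen E.le d e}) := by
  have past_conf : ∀ {d f}, Relation.ReflTransGen E.le d e → E.conf f d → E.conf e f :=
    fun hd hc => hE.symm (hE.conf_of_reflTransGen hc hd)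
  refine ⟨Set.union_subset hx.1 fun d hd => hd.1, ?_, ?_⟩
  · rintro d (hd | hd) f hf hfd
    · exact Or.inl (hx.2.1 d hd f hf hfd)
    · exact Or.inr ⟨hf, .head hfd hd.2⟩
  · rintro d (hd | hd) f (hf | hf) hc
    · exact hx.2.2 d hd f hf hc
    · exact hfree d hd (past_conf hf.2 hc)
    · exact hfree f hf (past_conf hd.2 (hE.symm hc))
    · exact hE.irrefl e (past_conf hd.2 (past_conf hf.2 hc))

lemma IsSaturated.mem_MaxC {x : Set ℕ} (hx : E.Config x) (hsat : E.IsSaturated x) :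
    x ∈ E.MaxC := by
  refine ⟨hx, fun y hy hxy => (Set.Subset.antisymm hxy fun e he => ?_).symm⟩
  by_contra hex
  obtain ⟨f, hf, hc⟩ := hsat e (hy.1 he) hex
  exact hy.2.2 e he f (hxy hf) hc

lemma IsPrimeConflict.isSaturated_of_mem_MaxC (hE : E.IsPrimeConflict) {x : Set ℕ}
    (hx : x ∈ E.MaxC) : E.IsSaturated x := by
  intro e he hex
  by_contra! hfree
  have hy := hx.2 _ (hE.config_union_past hx.1 hfree) Set.subset_union_left
  exact hex (hy ▸ Or.inr ⟨he, .refl⟩)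

lemma exists_MaxC_superset (hfin : E.ev.Finite) {x : Set ℕ} (hx : E.Config x) :
    ∃ y ∈ E.MaxC, x ⊆ y := by
  obtain ⟨y, hy, hmax⟩ := Set.Finite.exists_maximalFor id {y | E.Config y ∧ x ⊆ y}
    (hfin.finite_subsets.subset fun y hy => hy.1.1) ⟨x, hx, subset_rfl⟩
  exact ⟨y, ⟨hy.1, fun z hz hyz => (hmax ⟨hz, hy.2.trans hyz⟩ hyz).antisymm hyz⟩, hy.2⟩

lemma config_empty : E.Config ∅ := ⟨by simp, by simp, by simp⟩

lemma MaxC_nonempty (hfin : E.ev.Finite) : E.MaxC.Nonempty :=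
  let ⟨y, hy, _⟩ := exists_MaxC_superset hfin config_empty; ⟨y, hy⟩

lemma IsPrimeConflict.exists_MaxC_mem (hE : E.IsPrimeConflict) (hfin : E.ev.Finite) {e : ℕ}
    (he : e ∈ E.ev) : ∃ x ∈ E.MaxC, e ∈ x := by
  obtain ⟨x, hx, hsub⟩ := exists_MaxC_superset hfin
    (hE.config_union_past config_empty (by simp))
  exact ⟨x, hx, hsub (Or.inr ⟨he, .refl⟩)⟩

lemma mem_minEv_proj_iff {A : P} {e : ℕ} : e ∈ (E.proj A).minEv ↔
    e ∈ E.ev ∧ (E.lbl e).sbj = A ∧ ∀ f ∈ E.ev, (E.lbl f).sbj = A → E.le f e → f = e := by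
  simp only [minEv, minIn, proj, Set.mem_ofPred_eq]
  grind

lemma minLbl_proj_eq_hat (hsbj : Set.InjOn (fun e => (E.lbl e).sbj) E.ev)
    (A : P) : (E.proj A).minLbl = hat E.lblSet A := by
  ext l
  simp only [minLbl, lblSet, hat, Set.mem_image, mem_minEv_proj_iff, Set.mem_ofPred_eq]
  constructor
  · rintro ⟨e, ⟨he, rfl, -⟩, rfl⟩
    exact ⟨⟨e, he, rfl⟩, rfl⟩
  · rintro ⟨⟨e, he, rfl⟩, rfl⟩
    exact ⟨e, ⟨he, rfl, fun f hf hfs _ => hsbj hf he hfs⟩, rfl⟩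

variable (E) in
def dual : ES P M := { E with le := fun e f => E.le f e }

@[simp] lemma dual_lbl : E.dual.lbl = E.lbl := rfl

lemma maxLbl_proj_eq_minLbl_dual_proj (A : P) : (E.proj A).maxLbl = (E.dual.proj A).minLbl := by
  simp only [maxLbl, minLbl, maxEv, minEv, maxIn, minIn, proj, dual]
  grind

structure IsEmbedding (E F : ES P M) (ι : ℕ → ℕ) : Prop where
  injective : Function.Injective ι
  mapsTo : ∀ a ∈ E.ev, ι a ∈ F.ev
  lbl : ∀ a, F.lbl (ι a) = E.lbl a
  le_iff : ∀ {a b}, a ∈ E.ev → b ∈ E.ev → (F.le (ι a) (ι b) ↔ E.le a b)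
  conf : ∀ {a b}, a ∈ E.ev → b ∈ E.ev → E.conf a b → F.conf (ι a) (ι b)

namespace IsEmbedding

variable {F : ES P M} {ι : ℕ → ℕ} (h : IsEmbedding E F ι)
include h

lemma dual : IsEmbedding E.dual F.dual ι :=
  { h with le_iff := fun ha hb => h.le_iff hb ha }

lemma lbl_mem_minLbl_proj {A : P} {a : ℕ} (ha : a ∈ E.ev) (hmin : ι a ∈ (F.proj A).minEv) :
    F.lbl (ι a) ∈ (E.proj A).minLbl := by
  rw [ES.mem_minEv_proj_iff, h.lbl] at hmin
  refine ⟨a, ES.mem_minEv_proj_iff.2 ⟨ha, hmin.2.1, fun b hb hbA hba => h.injective ?_⟩,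
    (h.lbl a).symm⟩
  exact hmin.2.2 _ (h.mapsTo b hb) (by rwa [h.lbl]) ((h.le_iff hb ha).2 hba)

lemma minLbl_proj_subset {A : P}
    (hrefl : ∀ a ∈ E.ev, ∀ v ∈ F.ev, (F.lbl v).sbj = A → F.le v (ι a) → ∃ b ∈ E.ev, v = ι b) :
    (E.proj A).minLbl ⊆ (F.proj A).minLbl := by
  rintro _ ⟨a, hmin, rfl⟩
  rw [ES.mem_minEv_proj_iff] at hmin
  refine ⟨ι a, ?_, h.lbl a⟩
  rw [ES.mem_minEv_proj_iff, h.lbl]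
  refine ⟨h.mapsTo a hmin.1, hmin.2.1, fun v hv hvA hva => ?_⟩
  obtain ⟨b, hb, rfl⟩ := hrefl a hmin.1 v hv hvA hva
  rw [h.lbl] at hvA
  rw [hmin.2.2 b hb hvA ((h.le_iff hb hmin.1).1 hva)]

lemma preimage_mem_MaxC {z : Set ℕ} (hz : F.Config z) (hsat : F.IsSaturated z)
    (hwit : ∀ a ∈ E.ev, ∀ w ∈ z, F.conf (ι a) w → ∃ b ∈ E.ev, ι b ∈ z ∧ E.conf a b) :
    {a ∈ E.ev | ι a ∈ z} ∈ E.MaxC := by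
  refine IsSaturated.mem_MaxC ⟨fun a ha => ha.1, ?_, ?_⟩ fun a ha haz => ?_
  · exact fun a ha b hb hba => ⟨hb, hz.2.1 _ ha.2 _ (h.mapsTo b hb) ((h.le_iff hb ha.1).2 hba)⟩
  · exact fun a ha b hb hc => hz.2.2 _ ha.2 _ hb.2 (h.conf ha.1 hb.1 hc)
  · obtain ⟨w, hw, hc⟩ := hsat _ (h.mapsTo a ha) fun hz => haz ⟨ha, hz⟩
    obtain ⟨b, hb, hbz, hab⟩ := hwit a ha w hw hc
    exact ⟨b, ⟨hb, hbz⟩, hab⟩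

lemma exists_mem_sbj_eq {Γ : Set P} (hE : E.Involves Γ) {z : Set ℕ}
    (hz : {a ∈ E.ev | ι a ∈ z} ∈ E.MaxC) {A : P} (hA : A ∈ Γ) :
    ∃ u ∈ z, (F.lbl u).sbj = A :=
  let ⟨a, ha, hs⟩ := hE _ hz A hA
  ⟨ι a, ha.2, by rwa [h.lbl]⟩

end IsEmbedding

end ES

section Seq

variable {E1 E2 : ES P M}

@[simp] lemma esSeq_lbl_tagL (e : ℕ) : (esSeq E1 E2).lbl (tagL e) = E1.lbl e := by
  simp [esSeq, tagL]

@[simp] lemma esSeq_lbl_tagC (k f : ℕ) : (esSeq E1 E2).lbl (tagC k f) = E2.lbl f := by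
  simp [esSeq, tagC]

lemma isEmbedding_esSeq_tagL : ES.IsEmbedding E1 (esSeq E1 E2) tagL where
  injective := tagL_injective
  mapsTo a ha := Or.inl ⟨a, ha, rfl⟩
  lbl := esSeq_lbl_tagL
  le_iff {a b} ha hb := by
    refine ⟨?_, fun hab => Or.inl ⟨a, ha, b, hb, hab, rfl, rfl⟩⟩
    rintro (⟨e, -, f, -, hef, hae, hbf⟩ | ⟨_, _, _, _, _, _, _, hae, _⟩ |
      ⟨_, _, _, _, _, _, _, _, hbf⟩)
    · rwa [tagL_injective hae, tagL_injective hbf]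
    · simp at hae
    · simp at hbf
  conf ha hb hab := Or.inl ⟨_, ha, _, hb, hab, rfl, rfl⟩

lemma isEmbedding_esSeq_tagC {x : Set ℕ} (hx : x ∈ E1.MaxC) :
    ES.IsEmbedding E2 (esSeq E1 E2) (tagC (encSet x)) where
  injective := tagC_injective _
  mapsTo a ha := Or.inr ⟨x, hx, a, ha, rfl⟩
  lbl := esSeq_lbl_tagC _
  le_iff {a b} ha hb := by
    refine ⟨?_, fun hab => Or.inr (Or.inl ⟨x, hx, a, ha, b, hb, hab, rfl, rfl⟩)⟩
    rintro (⟨_, _, _, _, _, hae, _⟩ | ⟨_, _, e, -, f, -, hef, hae, hbf⟩ |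
      ⟨_, _, _, _, _, _, _, hae, _⟩)
    · simp at hae
    · rwa [(tagC_inj.1 hae).2, (tagC_inj.1 hbf).2]
    · simp at hae
  conf ha hb hab := Or.inr (Or.inl ⟨x, hx, _, ha, _, hb, hab, rfl, rfl⟩)

lemma esSeq_le_tagL_iff {f w : ℕ} : (esSeq E1 E2).le (tagL f) w ↔
    (∃ g ∈ E1.ev, f ∈ E1.ev ∧ E1.le f g ∧ w = tagL g) ∨
    ∃ x ∈ E1.MaxC, f ∈ x ∧ ∃ g ∈ E2.ev, (E1.lbl f).sbj = (E2.lbl g).sbj ∧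
      w = tagC (encSet x) g := by
  simp only [esSeq, ne_eq, tagL_inj, ↓existsAndEq, true_and, exists_and_left, tagL_ne_tagC,
    false_and, and_false, exists_const, false_or]
  grind

lemma esSeq_le_tagC_iff {k f w : ℕ} : (esSeq E1 E2).le (tagC k f) w ↔
    ∃ x ∈ E1.MaxC, encSet x = k ∧ f ∈ E2.ev ∧ ∃ g ∈ E2.ev, E2.le f g ∧ w = tagC k g := by
  simp only [esSeq, ne_eq, tagC_ne_tagL, false_and, and_false, exists_const, tagC_inj,
    ↓existsAndEq, and_true, exists_and_left, or_false, false_or]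
  grind

lemma ES.IsPrimeConflict.esSeq (h1 : E1.IsPrimeConflict) (h2 : E2.IsPrimeConflict)
    (hfin : E1.ev.Finite) : (esSeq E1 E2).IsPrimeConflict where
  irrefl u hu := by
    rcases hu with ⟨e, -, f, -, hc, rfl, hv⟩ | ⟨x, -, e, -, f, -, hc, rfl, hv⟩ |
      ⟨x, hx, x', hx', hne, e, -, f, -, rfl, hv⟩ | ⟨x, -, e, -, -, f, -, ⟨rfl, hv⟩ | ⟨rfl, hv⟩⟩
    · obtain rfl := tagL_injective hv
      exact h1.irrefl e hc
    · obtain rfl := (tagC_inj.1 hv).2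
      exact h2.irrefl e hc
    · exact hne (ES.encSet_injOn_MaxC hfin hx hx' (tagC_inj.1 hv).1)
    · simp at hv
    · simp at hv
  symm {u v} huv := by
    rcases huv with ⟨e, he, f, hf, hc, rfl, rfl⟩ | ⟨x, hx, e, he, f, hf, hc, rfl, rfl⟩ |
      ⟨x, hx, x', hx', hne, e, he, f, hf, rfl, rfl⟩ | ⟨x, hx, e, he, hc, f, hf, huv⟩
    · exact Or.inl ⟨f, hf, e, he, h1.symm hc, rfl, rfl⟩
    · exact Or.inr (Or.inl ⟨x, hx, f, hf, e, he, h2.symm hc, rfl, rfl⟩)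
    · exact Or.inr (Or.inr (Or.inl ⟨x', hx', x, hx, Ne.symm hne, f, hf, e, he, rfl, rfl⟩))
    · exact Or.inr (Or.inr (Or.inr ⟨x, hx, e, he, hc, f, hf, huv.symm.imp And.symm And.symm⟩))
  hered {u v w} huv hvw := by
    rcases huv with ⟨e, he, f, -, hc, rfl, rfl⟩ | ⟨x, hx, e, he, f, -, hc, rfl, rfl⟩ |
      ⟨x, hx, x', hx', hne, e, he, f, -, rfl, rfl⟩ |
      ⟨x, hx, e, he, ⟨e', he', hc⟩, f, hf, ⟨rfl, rfl⟩ | ⟨rfl, rfl⟩⟩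
    · rcases esSeq_le_tagL_iff.1 hvw with ⟨g, hg, -, hfg, rfl⟩ | ⟨x, hx, hfx, g, hg, -, rfl⟩
      · exact Or.inl ⟨e, he, g, hg, h1.hered hc hfg, rfl, rfl⟩
      · exact Or.inr (Or.inr (Or.inr ⟨x, hx, e, he, ⟨f, hfx, hc⟩, g, hg, Or.inl ⟨rfl, rfl⟩⟩))
    · obtain ⟨-, -, -, -, g, hg, hfg, rfl⟩ := esSeq_le_tagC_iff.1 hvw
      exact Or.inr (Or.inl ⟨x, hx, e, he, g, hg, h2.hered hc hfg, rfl, rfl⟩)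
    · obtain ⟨-, -, -, -, g, hg, -, rfl⟩ := esSeq_le_tagC_iff.1 hvw
      exact Or.inr (Or.inr (Or.inl ⟨x, hx, x', hx', hne, e, he, g, hg, rfl, rfl⟩))
    · obtain ⟨-, -, -, -, g, hg, -, rfl⟩ := esSeq_le_tagC_iff.1 hvw
      exact Or.inr (Or.inr (Or.inr ⟨x, hx, e, he, ⟨e', he', hc⟩, g, hg, Or.inl ⟨rfl, rfl⟩⟩))
    · rcases esSeq_le_tagL_iff.1 hvw with ⟨g, hg, -, heg, rfl⟩ | ⟨x₁, hx₁, hex₁, g, hg, -, rfl⟩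
      · have hc' : E1.conf g e' := h1.symm (h1.hered (h1.symm hc) heg)
        exact Or.inr (Or.inr (Or.inr ⟨x, hx, g, hg, ⟨e', he', hc'⟩, f, hf, Or.inr ⟨rfl, rfl⟩⟩))
      · by_cases hxx : x = x₁
        · exact absurd hc (hx.1.2.2 e (hxx ▸ hex₁) e' he')
        · exact Or.inr (Or.inr (Or.inl ⟨x, hx, x₁, hx₁, hxx, f, hf, g, hg, rfl, rfl⟩))

section

variable {z : Set ℕ} (hz : (esSeq E1 E2).Config z) (hsat : (esSeq E1 E2).IsSaturated z)
include hz

lemma esSeq_base_eq_of_mem {x x' : Set ℕ} (hx : x ∈ E1.MaxC) (hx' : x' ∈ E1.MaxC) {f f' : ℕ}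
    (hf : f ∈ E2.ev) (hf' : f' ∈ E2.ev) (hxz : tagC (encSet x) f ∈ z)
    (hx'z : tagC (encSet x') f' ∈ z) : x = x' := by
  by_contra hne
  exact hz.2.2 _ hxz _ hx'z
    (Or.inr (Or.inr (Or.inl ⟨x, hx, x', hx', hne, f, hf, f', hf', rfl, rfl⟩)))

include hsat

lemma esSeq_base_subset_of_mem (h1 : E1.IsPrimeConflict) {x₀ : Set ℕ} (hx₀ : x₀ ∈ E1.MaxC)
    {f₀ : ℕ} (hf₀ : f₀ ∈ E2.ev) (hz₀ : tagC (encSet x₀) f₀ ∈ z) : ∀ e ∈ x₀, tagL e ∈ z := by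
  intro e he
  by_contra hez
  obtain ⟨w, hw, hc⟩ := hsat _ (isEmbedding_esSeq_tagL.mapsTo e (hx₀.1.1 he)) hez
  rcases hc with ⟨e₁, -, e', he', hc, hu, rfl⟩ | ⟨_, _, _, _, _, _, _, hu, _⟩ |
    ⟨_, _, _, _, _, _, _, _, _, hu, _⟩ | ⟨x, hx, e₁, -, ⟨e', he', hc⟩, f, hf, ⟨hu, rfl⟩ | ⟨hu, -⟩⟩
  · obtain rfl := tagL_injective hu
    exact hz.2.2 _ hw _ hz₀ (Or.inr (Or.inr (Or.inr
      ⟨x₀, hx₀, e', he', ⟨e, he, h1.symm hc⟩, f₀, hf₀, Or.inl ⟨rfl, rfl⟩⟩)))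
  · simp at hu
  · simp at hu
  · obtain rfl := tagL_injective hu
    obtain rfl := esSeq_base_eq_of_mem hz hx hx₀ hf hf₀ hw hz₀
    exact hx.1.2.2 _ he _ he' hc
  · simp at hu

lemma esSeq_left_mem_MaxC (h1 : E1.IsPrimeConflict) : {e ∈ E1.ev | tagL e ∈ z} ∈ E1.MaxC := by
  refine isEmbedding_esSeq_tagL.preimage_mem_MaxC hz hsat fun a ha w hw hc => ?_
  rcases hc with ⟨e, -, f, hf, hc, hu, rfl⟩ | ⟨_, _, _, _, _, _, _, hu, _⟩ |
    ⟨_, _, _, _, _, _, _, _, _, hu, _⟩ | ⟨x, hx, e, -, ⟨e', he', hc⟩, f, hf, ⟨hu, rfl⟩ | ⟨hu, -⟩⟩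
  · obtain rfl := tagL_injective hu
    exact ⟨f, hf, hw, hc⟩
  · simp at hu
  · simp at hu
  · obtain rfl := tagL_injective hu
    exact ⟨e', hx.1.1 he', esSeq_base_subset_of_mem hz hsat h1 hx hf hw e' he', hc⟩
  · simp at hu

lemma esSeq_copy_mem_MaxC (h1 : E1.IsPrimeConflict) (hfin : E1.ev.Finite) {x₀ : Set ℕ}
    (hx₀ : x₀ ∈ E1.MaxC) {f₀ : ℕ} (hf₀ : f₀ ∈ E2.ev) (hz₀ : tagC (encSet x₀) f₀ ∈ z) :
    {f ∈ E2.ev | tagC (encSet x₀) f ∈ z} ∈ E2.MaxC := by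
  refine (isEmbedding_esSeq_tagC hx₀).preimage_mem_MaxC hz hsat fun a ha w hw hc => ?_
  rcases hc with ⟨_, _, _, _, _, hu, _⟩ | ⟨x, hx, e, -, f, hf, hc, hu, rfl⟩ |
    ⟨x, hx, x', hx', hne, e, -, f, hf, hu, rfl⟩ |
    ⟨x, hx, e, he, ⟨e', he', hc⟩, f, -, ⟨hu, -⟩ | ⟨hu, rfl⟩⟩
  · simp at hu
  · obtain ⟨hk, rfl⟩ := tagC_inj.1 hu
    exact ⟨f, hf, hk ▸ hw, hc⟩
  · obtain rfl := ES.encSet_injOn_MaxC hfin hx₀ hx (tagC_inj.1 hu).1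
    exact absurd (esSeq_base_eq_of_mem hz hx₀ hx' hf₀ hf hz₀ hw) hne
  · simp at hu
  · obtain rfl := ES.encSet_injOn_MaxC hfin hx₀ hx (tagC_inj.1 hu).1
    exact absurd (Or.inl ⟨e, he, e', hx₀.1.1 he', hc, rfl, rfl⟩)
      (hz.2.2 _ hw _ (esSeq_base_subset_of_mem hz hsat h1 hx₀ hf₀ hz₀ e' he'))

lemma esSeq_exists_copy_mem (h1 : E1.IsPrimeConflict) (hfin : E1.ev.Finite) {f : ℕ}
    (hf : f ∈ E2.ev) : ∃ x ∈ E1.MaxC, ∃ g ∈ E2.ev, tagC (encSet x) g ∈ z := by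
  by_contra! hnone
  have hx := esSeq_left_mem_MaxC hz hsat h1
  obtain ⟨w, hw, hc⟩ :=
    hsat _ ((isEmbedding_esSeq_tagC hx (E2 := E2)).mapsTo f hf) (hnone _ hx f hf)
  rcases hc with ⟨_, _, _, _, _, hu, _⟩ | ⟨x', hx', _, _, g, hg, _, _, rfl⟩ |
    ⟨_, _, x', hx', _, _, _, g, hg, _, rfl⟩ |
    ⟨x', hx', e, he, ⟨e', he', hc⟩, _, _, ⟨hu, -⟩ | ⟨hu, rfl⟩⟩
  · simp at hu
  · exact hnone x' hx' g hg hw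
  · exact hnone x' hx' g hg hw
  · simp at hu
  · obtain rfl := ES.encSet_injOn_MaxC hfin hx hx' (tagC_inj.1 hu).1
    exact hz.2.2 _ hw _ he'.2 (Or.inl ⟨e, he, e', he'.1, hc, rfl, rfl⟩)

end

lemma esSeq_minLbl_proj_of_involves {A : P} (hA : ∀ x ∈ E1.MaxC, ∃ e ∈ x, (E1.lbl e).sbj = A) :
    ((esSeq E1 E2).proj A).minLbl = (E1.proj A).minLbl := by
  refine Set.Subset.antisymm ?_ (isEmbedding_esSeq_tagL.minLbl_proj_subset ?_)
  · rintro _ ⟨u, hu, rfl⟩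
    obtain ⟨hu_ev, hu_sbj, hu_min⟩ := ES.mem_minEv_proj_iff.1 hu
    rcases hu_ev with ⟨e, he, rfl⟩ | ⟨x, hx, f, hf, rfl⟩
    · exact isEmbedding_esSeq_tagL.lbl_mem_minLbl_proj he hu
    · obtain ⟨e, hex, rfl⟩ := hA x hx
      rw [esSeq_lbl_tagC] at hu_sbj
      have := hu_min (tagL e) (Or.inl ⟨e, hx.1.1 hex, rfl⟩) (by simp)
        (Or.inr (Or.inr ⟨x, hx, e, hex, f, hf, hu_sbj.symm, rfl, rfl⟩))
      simp at this
  · rintro a - v - - (⟨b, hb, -, -, -, rfl, -⟩ | ⟨_, _, _, _, _, _, _, _, hv⟩ |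
      ⟨_, _, _, _, _, _, _, _, hv⟩)
    · exact ⟨b, hb, rfl⟩
    · simp at hv
    · simp at hv

lemma esSeq_minLbl_proj_of_not_mem {A : P} (hA : ∀ e ∈ E1.ev, (E1.lbl e).sbj ≠ A)
    (hne : E1.MaxC.Nonempty) : ((esSeq E1 E2).proj A).minLbl = (E2.proj A).minLbl := by
  obtain ⟨x₀, hx₀⟩ := hne
  refine Set.Subset.antisymm ?_ ((isEmbedding_esSeq_tagC hx₀).minLbl_proj_subset ?_)
  · rintro _ ⟨u, hu, rfl⟩
    obtain ⟨hu_ev, hu_sbj, -⟩ := ES.mem_minEv_proj_iff.1 hu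
    rcases hu_ev with ⟨e, he, rfl⟩ | ⟨x, hx, f, hf, rfl⟩
    · exact absurd (esSeq_lbl_tagL (E2 := E2) e ▸ hu_sbj) (hA e he)
    · exact (isEmbedding_esSeq_tagC hx).lbl_mem_minLbl_proj hf hu
  · rintro a - v - hvA (⟨_, _, _, _, _, _, hv⟩ | ⟨x, -, b, hb, _, -, -, rfl, hv⟩ |
      ⟨x, hx, e, he, -, -, -, rfl, -⟩)
    · simp at hv
    · exact ⟨b, hb, by rw [(tagC_inj.1 hv).1]⟩
    · exact absurd (esSeq_lbl_tagL (E2 := E2) e ▸ hvA) (hA e (hx.1.1 he))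

lemma esSeq_maxLbl_proj_of_not_mem {A : P} (hA : ∀ f ∈ E2.ev, (E2.lbl f).sbj ≠ A) :
    ((esSeq E1 E2).proj A).maxLbl = (E1.proj A).maxLbl := by
  have h := (isEmbedding_esSeq_tagL (E1 := E1) (E2 := E2)).dual
  rw [ES.maxLbl_proj_eq_minLbl_dual_proj, ES.maxLbl_proj_eq_minLbl_dual_proj]
  refine Set.Subset.antisymm ?_ (h.minLbl_proj_subset ?_)
  · rintro _ ⟨u, hu, rfl⟩
    obtain ⟨hu_ev, hu_sbj, -⟩ := ES.mem_minEv_proj_iff.1 hu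
    rcases hu_ev with ⟨e, he, rfl⟩ | ⟨x, hx, f, hf, rfl⟩
    · exact h.lbl_mem_minLbl_proj he hu
    · exact absurd (esSeq_lbl_tagC (E1 := E1) _ f ▸ hu_sbj) (hA f hf)
  · rintro a - v - hvA (⟨_, _, b, hb, -, -, rfl⟩ | ⟨_, _, _, _, _, _, _, hv, _⟩ |
      ⟨_, _, _, _, f, hf, -, -, rfl⟩)
    · exact ⟨b, hb, rfl⟩
    · simp at hv
    · exact absurd (esSeq_lbl_tagC (E1 := E1) _ f ▸ hvA) (hA f hf)

lemma esSeq_maxLbl_proj_of_mem {A : P} (hA : ∃ f ∈ E2.ev, (E2.lbl f).sbj = A)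
    (hcover : ∀ e ∈ E1.ev, ∃ x ∈ E1.MaxC, e ∈ x) (hne : E1.MaxC.Nonempty) :
    ((esSeq E1 E2).proj A).maxLbl = (E2.proj A).maxLbl := by
  obtain ⟨x₀, hx₀⟩ := hne
  rw [ES.maxLbl_proj_eq_minLbl_dual_proj, ES.maxLbl_proj_eq_minLbl_dual_proj]
  refine Set.Subset.antisymm ?_ ((isEmbedding_esSeq_tagC hx₀).dual.minLbl_proj_subset ?_)
  · rintro _ ⟨u, hu, rfl⟩
    obtain ⟨hu_ev, hu_sbj, hu_max⟩ := ES.mem_minEv_proj_iff.1 hu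
    rcases hu_ev with ⟨e, he, rfl⟩ | ⟨x, hx, f, hf, rfl⟩
    · obtain ⟨x, hx, hex⟩ := hcover e he
      obtain ⟨f, hf, rfl⟩ := hA
      rw [ES.dual_lbl, esSeq_lbl_tagL] at hu_sbj
      have := hu_max (tagC (encSet x) f) (Or.inr ⟨x, hx, f, hf, rfl⟩) (by simp)
        (Or.inr (Or.inr ⟨x, hx, e, hex, f, hf, hu_sbj, rfl, rfl⟩))
      simp at this
    · exact (isEmbedding_esSeq_tagC hx).dual.lbl_mem_minLbl_proj hf hu
  · rintro a - v - - (⟨_, _, _, _, _, hv, _⟩ | ⟨x, -, _, -, b, hb, -, hv, rfl⟩ |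
      ⟨_, _, _, _, _, _, _, hv, _⟩)
    · simp at hv
    · exact ⟨b, hb, by rw [(tagC_inj.1 hv).1]⟩
    · simp at hv

lemma ES.Involves.esSeq {Γ1 Γ2 : Set P} (i1 : E1.Involves Γ1) (i2 : E2.Involves Γ2)
    (h1 : E1.IsPrimeConflict) (h2 : E2.IsPrimeConflict) (hfin1 : E1.ev.Finite)
    (hfin2 : E2.ev.Finite) : (esSeq E1 E2).Involves (Γ1 ∪ Γ2) := by
  intro z hz A hA
  have hsat := (h1.esSeq h2 hfin1).isSaturated_of_mem_MaxC hz
  rcases hA with hA | hA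
  · exact isEmbedding_esSeq_tagL.exists_mem_sbj_eq i1 (esSeq_left_mem_MaxC hz.1 hsat h1) hA
  · obtain ⟨y, hy⟩ := E2.MaxC_nonempty hfin2
    obtain ⟨f, hf, -⟩ := i2 y hy A hA
    obtain ⟨x, hx, f₀, hf₀, hz₀⟩ := esSeq_exists_copy_mem hz.1 hsat h1 hfin1 (hy.1.1 hf)
    exact (isEmbedding_esSeq_tagC hx).exists_mem_sbj_eq i2
      (esSeq_copy_mem_MaxC hz.1 hsat h1 hfin1 hx hf₀ hz₀) hA

lemma esSeq_ev_finite (h1 : E1.ev.Finite) (h2 : E2.ev.Finite) :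
    (esSeq E1 E2).ev.Finite := by
  have hMaxC : E1.MaxC.Finite := h1.finite_subsets.subset fun x hx => hx.1.1
  refine (h1.image tagL).union ((hMaxC.biUnion fun x _ => h2.image (tagC (encSet x))).subset ?_)
  rintro _ ⟨x, hx, f, hf, rfl⟩
  exact Set.mem_biUnion hx ⟨f, hf, rfl⟩

end Seq

section Tensor

variable {E1 E2 : ES P M}

@[simp] lemma esTensor_lbl_tagL (e : ℕ) : (esTensor E1 E2).lbl (tagL e) = E1.lbl e := by
  simp [esTensor, tagL]

@[simp] lemma esTensor_lbl_tagR (e : ℕ) : (esTensor E1 E2).lbl (tagR e) = E2.lbl e := by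
  simp [esTensor, tagR]

lemma isEmbedding_esTensor_tagL : ES.IsEmbedding E1 (esTensor E1 E2) tagL where
  injective := tagL_injective
  mapsTo a ha := Or.inl ⟨a, ha, rfl⟩
  lbl := esTensor_lbl_tagL
  le_iff {a b} ha hb := by
    refine ⟨?_, fun hab => Or.inl ⟨a, ha, b, hb, hab, rfl, rfl⟩⟩
    rintro (⟨e, -, f, -, hef, hae, hbf⟩ | ⟨_, _, _, _, _, hae, _⟩)
    · rwa [tagL_injective hae, tagL_injective hbf]
    · simp at hae
  conf ha hb hab := Or.inl ⟨_, ha, _, hb, hab, rfl, rfl⟩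

lemma isEmbedding_esTensor_tagR : ES.IsEmbedding E2 (esTensor E1 E2) tagR where
  injective := tagR_injective
  mapsTo a ha := Or.inr ⟨a, ha, rfl⟩
  lbl := esTensor_lbl_tagR
  le_iff {a b} ha hb := by
    refine ⟨?_, fun hab => Or.inr ⟨a, ha, b, hb, hab, rfl, rfl⟩⟩
    rintro (⟨_, _, _, _, _, hae, _⟩ | ⟨e, -, f, -, hef, hae, hbf⟩)
    · simp at hae
    · rwa [tagR_injective hae, tagR_injective hbf]
  conf ha hb hab := Or.inr ⟨_, ha, _, hb, hab, rfl, rfl⟩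

lemma ES.IsPrimeConflict.esTensor (h1 : E1.IsPrimeConflict) (h2 : E2.IsPrimeConflict) :
    (esTensor E1 E2).IsPrimeConflict where
  irrefl u := by
    rintro (⟨e, -, f, -, hc, rfl, hv⟩ | ⟨e, -, f, -, hc, rfl, hv⟩)
    · exact h1.irrefl e (tagL_injective hv ▸ hc)
    · exact h2.irrefl e (tagR_injective hv ▸ hc)
  symm := by
    rintro _ _ (⟨e, he, f, hf, hc, rfl, rfl⟩ | ⟨e, he, f, hf, hc, rfl, rfl⟩)
    · exact Or.inl ⟨f, hf, e, he, h1.symm hc, rfl, rfl⟩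
    · exact Or.inr ⟨f, hf, e, he, h2.symm hc, rfl, rfl⟩
  hered := by
    rintro _ _ _ (⟨e, he, f, -, hc, rfl, rfl⟩ | ⟨e, he, f, -, hc, rfl, rfl⟩)
      (⟨f', -, g, hg, hfg, hf, rfl⟩ | ⟨f', -, g, hg, hfg, hf, rfl⟩)
    · exact Or.inl ⟨e, he, g, hg, h1.hered hc (tagL_injective hf ▸ hfg), rfl, rfl⟩
    · simp at hf
    · simp at hf
    · exact Or.inr ⟨e, he, g, hg, h2.hered hc (tagR_injective hf ▸ hfg), rfl, rfl⟩

lemma esTensor_minLbl_proj {A : P} :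
    ((esTensor E1 E2).proj A).minLbl = (E1.proj A).minLbl ∪ (E2.proj A).minLbl := by
  refine Set.Subset.antisymm ?_ (Set.union_subset
    (isEmbedding_esTensor_tagL.minLbl_proj_subset ?_)
    (isEmbedding_esTensor_tagR.minLbl_proj_subset ?_))
  · rintro _ ⟨u, hu, rfl⟩
    rcases (ES.mem_minEv_proj_iff.1 hu).1 with ⟨e, he, rfl⟩ | ⟨f, hf, rfl⟩
    · exact Or.inl (isEmbedding_esTensor_tagL.lbl_mem_minLbl_proj he hu)
    · exact Or.inr (isEmbedding_esTensor_tagR.lbl_mem_minLbl_proj hf hu)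
  · rintro a - v - - (⟨b, hb, -, -, -, rfl, -⟩ | ⟨_, _, _, _, _, _, hv⟩)
    · exact ⟨b, hb, rfl⟩
    · simp at hv
  · rintro a - v - - (⟨_, _, _, _, _, _, hv⟩ | ⟨b, hb, -, -, -, rfl, -⟩)
    · simp at hv
    · exact ⟨b, hb, rfl⟩

lemma ES.Involves.esTensor {Γ1 Γ2 : Set P} (i1 : E1.Involves Γ1) (i2 : E2.Involves Γ2)
    (h1 : E1.IsPrimeConflict) (h2 : E2.IsPrimeConflict) :
    (esTensor E1 E2).Involves (Γ1 ∪ Γ2) := by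
  intro z hz A hA
  have hsat := (h1.esTensor h2).isSaturated_of_mem_MaxC hz
  rcases hA with hA | hA
  · refine isEmbedding_esTensor_tagL.exists_mem_sbj_eq i1
      (isEmbedding_esTensor_tagL.preimage_mem_MaxC hz.1 hsat ?_) hA
    rintro a - w hw (⟨e, -, f, hf, hc, hu, rfl⟩ | ⟨_, _, _, _, _, hu, _⟩)
    · exact ⟨f, hf, hw, tagL_injective hu ▸ hc⟩
    · simp at hu
  · refine isEmbedding_esTensor_tagR.exists_mem_sbj_eq i2
      (isEmbedding_esTensor_tagR.preimage_mem_MaxC hz.1 hsat ?_) hA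
    rintro a - w hw (⟨_, _, _, _, _, hu, _⟩ | ⟨e, -, f, hf, hc, hu, rfl⟩)
    · simp at hu
    · exact ⟨f, hf, hw, tagR_injective hu ▸ hc⟩

end Tensor

section Sum

variable {E1 E2 : ES P M}

@[simp] lemma esSum_lbl_tagL (e : ℕ) : (esSum E1 E2).lbl (tagL e) = E1.lbl e :=
  esTensor_lbl_tagL e

@[simp] lemma esSum_lbl_tagR (e : ℕ) : (esSum E1 E2).lbl (tagR e) = E2.lbl e :=
  esTensor_lbl_tagR e

lemma isEmbedding_esSum_tagL : ES.IsEmbedding E1 (esSum E1 E2) tagL :=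
  { isEmbedding_esTensor_tagL with
    conf := fun ha hb hab => Or.inl (isEmbedding_esTensor_tagL.conf ha hb hab) }

lemma isEmbedding_esSum_tagR : ES.IsEmbedding E2 (esSum E1 E2) tagR :=
  { isEmbedding_esTensor_tagR with
    conf := fun ha hb hab => Or.inl (isEmbedding_esTensor_tagR.conf ha hb hab) }

lemma ES.IsPrimeConflict.esSum (h1 : E1.IsPrimeConflict) (h2 : E2.IsPrimeConflict) :
    (esSum E1 E2).IsPrimeConflict where
  irrefl u := by
    rintro (hc | ⟨e, -, f, -, ⟨rfl, hv⟩ | ⟨rfl, hv⟩⟩)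
    · exact (h1.esTensor h2).irrefl u hc
    · simp at hv
    · simp at hv
  symm := by
    rintro _ _ (hc | ⟨e, he, f, hf, huv⟩)
    · exact Or.inl ((h1.esTensor h2).symm hc)
    · exact Or.inr ⟨e, he, f, hf, huv.symm.imp And.symm And.symm⟩
  hered := by
    rintro _ _ _ (hc | ⟨e, he, f, hf, ⟨rfl, rfl⟩ | ⟨rfl, rfl⟩⟩) hvw
    · exact Or.inl ((h1.esTensor h2).hered hc hvw)
    · rcases hvw with ⟨_, _, _, _, _, hv, _⟩ | ⟨f', -, g, hg, -, -, rfl⟩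
      · simp at hv
      · exact Or.inr ⟨e, he, g, hg, Or.inl ⟨rfl, rfl⟩⟩
    · rcases hvw with ⟨e', -, g, hg, -, -, rfl⟩ | ⟨_, _, _, _, _, hv, _⟩
      · exact Or.inr ⟨g, hg, f, hf, Or.inr ⟨rfl, rfl⟩⟩
      · simp at hv

lemma esSum_minLbl_proj {A : P} :
    ((esSum E1 E2).proj A).minLbl = (E1.proj A).minLbl ∪ (E2.proj A).minLbl :=
  esTensor_minLbl_proj

lemma ES.Involves.esSum {Γ : Set P} (i1 : E1.Involves Γ) (i2 : E2.Involves Γ)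
    (h1 : E1.IsPrimeConflict) (h2 : E2.IsPrimeConflict) : (esSum E1 E2).Involves Γ := by
  intro z hz A hA
  have hsat := (h1.esSum h2).isSaturated_of_mem_MaxC hz
  by_cases hL : ∃ e ∈ E1.ev, tagL e ∈ z
  · obtain ⟨e₀, he₀, hz₀⟩ := hL
    refine isEmbedding_esSum_tagL.exists_mem_sbj_eq i1
      (isEmbedding_esSum_tagL.preimage_mem_MaxC hz.1 hsat ?_) hA
    rintro a - w hw ((⟨e, -, f, hf, hc, hu, rfl⟩ | ⟨_, _, _, _, _, hu, _⟩) |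
      ⟨_, _, f, hf, ⟨-, rfl⟩ | ⟨hu, -⟩⟩)
    · exact ⟨f, hf, hw, tagL_injective hu ▸ hc⟩
    · simp at hu
    · exact absurd (Or.inr ⟨e₀, he₀, f, hf, Or.inl ⟨rfl, rfl⟩⟩) (hz.1.2.2 _ hz₀ _ hw)
    · simp at hu
  · refine isEmbedding_esSum_tagR.exists_mem_sbj_eq i2
      (isEmbedding_esSum_tagR.preimage_mem_MaxC hz.1 hsat ?_) hA
    rintro a - w hw ((⟨_, _, _, _, _, hu, _⟩ | ⟨e, -, f, hf, hc, hu, rfl⟩) |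
      ⟨e, he, _, _, ⟨hu, -⟩ | ⟨-, rfl⟩⟩)
    · simp at hu
    · exact ⟨f, hf, hw, tagR_injective hu ▸ hc⟩
    · simp at hu
    · exact absurd ⟨e, he, hw⟩ hL

end Sum

structure WellTyped (E : ES P M) (Γ : Set P) (φ : Set (Label P M)) : Prop where
  finite : E.ev.Finite
  prime : E.IsPrimeConflict
  sbj_mem : ∀ e ∈ E.ev, (E.lbl e).sbj ∈ Γ
  involves : E.Involves Γ
  minLbl_proj : ∀ A, (E.proj A).minLbl = hat φ A

lemma wellTyped_esEmpty [Nonempty P] [Nonempty M] :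
    WellTyped (esEmpty : ES P M) ∅ ∅ where
  finite := Set.finite_empty
  prime := ⟨fun _ h => h, id, fun h _ => h⟩
  sbj_mem _ he := he.elim
  involves _ _ _ hA := hA.elim
  minLbl_proj A := by
    rw [ES.minLbl_proj_eq_hat (Set.injOn_empty _)]
    simp [hat, ES.lblSet, esEmpty]

lemma wellTyped_esAct {a b : P} {m : M} (hab : a ≠ b) :
    WellTyped (esAct a b m) {a, b} {.out a b m, .inp a b m} where
  finite := (Set.finite_singleton 1).insert 0
  prime := ⟨fun _ h => h, id, fun h _ => h⟩
  sbj_mem := by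
    rintro e (rfl | rfl) <;> simp [esAct]
  involves x hx A hA := by
    have hall : ({0, 1} : Set ℕ) = x :=
      hx.2 _ ⟨subset_rfl, fun _ _ _ hf _ => hf, fun _ _ _ _ h => h⟩ hx.1.1
    rcases hA with rfl | rfl
    · exact ⟨0, hall ▸ Or.inl rfl, by simp [esAct]⟩
    · exact ⟨1, hall ▸ Or.inr rfl, by simp [esAct]⟩
  minLbl_proj A := by
    rw [ES.minLbl_proj_eq_hat]
    · simp [ES.lblSet, esAct, Set.image_pair]
    · rintro e (rfl | rfl) f (rfl | rfl) h <;> simp_all [esAct]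

namespace WellTyped

variable {E E1 E2 : ES P M} {Γ Γ1 Γ2 : Set P} {φ φ1 φ2 : Set (Label P M)}

lemma sbj_ne (h : WellTyped E Γ φ) {A : P} (hA : A ∉ Γ) : ∀ e ∈ E.ev, (E.lbl e).sbj ≠ A :=
  fun e he hs => hA (hs ▸ h.sbj_mem e he)

lemma hat_eq_empty (h : WellTyped E Γ φ) {A : P} (hA : A ∉ Γ) : hat φ A = ∅ := by
  rw [← h.minLbl_proj, Set.eq_empty_iff_forall_notMem]
  rintro _ ⟨e, hmin, -⟩
  obtain ⟨he, rfl, -⟩ := ES.mem_minEv_proj_iff.1 hmin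
  exact h.sbj_ne hA e he rfl

lemma esSeq (g1 : WellTyped E1 Γ1 φ1) (g2 : WellTyped E2 Γ2 φ2) :
    WellTyped (esSeq E1 E2) (Γ1 ∪ Γ2) (φ1 ∪ lminus φ2 Γ1) where
  finite := esSeq_ev_finite g1.finite g2.finite
  prime := g1.prime.esSeq g2.prime g1.finite
  sbj_mem := by
    rintro _ (⟨e, he, rfl⟩ | ⟨x, -, f, hf, rfl⟩)
    · simpa using Or.inl (g1.sbj_mem e he)
    · simpa using Or.inr (g2.sbj_mem f hf)
  involves := g1.involves.esSeq g2.involves g1.prime g2.prime g1.finite g2.finite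
  minLbl_proj A := by
    rw [hat_union]
    by_cases hA : A ∈ Γ1
    · rw [hat_lminus_of_mem hA, Set.union_empty, ← g1.minLbl_proj]
      exact esSeq_minLbl_proj_of_involves fun x hx => g1.involves x hx A hA
    · rw [hat_lminus_of_notMem hA, g1.hat_eq_empty hA, Set.empty_union, ← g2.minLbl_proj]
      exact esSeq_minLbl_proj_of_not_mem (g1.sbj_ne hA) (ES.MaxC_nonempty g1.finite)

lemma esTensor (g1 : WellTyped E1 Γ1 φ1) (g2 : WellTyped E2 Γ2 φ2) :
    WellTyped (esTensor E1 E2) (Γ1 ∪ Γ2) (φ1 ∪ φ2) where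
  finite := (g1.finite.image _).union (g2.finite.image _)
  prime := g1.prime.esTensor g2.prime
  sbj_mem := by
    rintro _ (⟨e, he, rfl⟩ | ⟨f, hf, rfl⟩)
    · simpa using Or.inl (g1.sbj_mem e he)
    · simpa using Or.inr (g2.sbj_mem f hf)
  involves := g1.involves.esTensor g2.involves g1.prime g2.prime
  minLbl_proj A := by
    rw [esTensor_minLbl_proj, g1.minLbl_proj, g2.minLbl_proj, hat_union]

lemma esSum (g1 : WellTyped E1 Γ φ1) (g2 : WellTyped E2 Γ φ2) :
    WellTyped (esSum E1 E2) Γ (φ1 ∪ φ2) where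
  finite := (g1.finite.image _).union (g2.finite.image _)
  prime := g1.prime.esSum g2.prime
  sbj_mem := by
    rintro _ (⟨e, he, rfl⟩ | ⟨f, hf, rfl⟩)
    · simpa using g1.sbj_mem e he
    · simpa using g2.sbj_mem f hf
  involves := g1.involves.esSum g2.involves g1.prime g2.prime
  minLbl_proj A := by
    rw [esSum_minLbl_proj, g1.minLbl_proj, g2.minLbl_proj, hat_union]

lemma disjoint_lblSet (g1 : WellTyped E1 Γ1 φ1) (g2 : WellTyped E2 Γ2 φ2) (hΓ : Γ1 ∩ Γ2 = ∅) :
    Disjoint E1.lblSet E2.lblSet := by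
  refine Set.disjoint_left.2 ?_
  rintro _ ⟨e, he, rfl⟩ ⟨f, hf, hfe⟩
  exact Set.eq_empty_iff_forall_notMem.1 hΓ _ ⟨g1.sbj_mem e he, hfe ▸ g2.sbj_mem f hf⟩

lemma wb_of_compch (g1 : WellTyped E1 Γ φ1) (g2 : WellTyped E2 Γ φ2)
    (hc : compch φ1 φ2 Γ) : wb E1 E2 := by
  have hm1 : minLblP E1 = hat φ1 := funext g1.minLbl_proj
  have hm2 : minLblP E2 = hat φ2 := funext g2.minLbl_proj
  obtain ⟨A, -, ⟨⟨hdisj, hout⟩, hne1, hne2⟩, huniq, hpass⟩ := hc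
  simp only [wb, active, passive, hm1, hm2]
  refine ⟨A, ⟨hne1, hne2, hdisj, hout⟩, fun A' ⟨hne1', hne2', hdisj', hout'⟩ => ?_, fun B hB => ?_⟩
  · have hA' : A' ∈ Γ := by_contra fun hA' => hne1' (g1.hat_eq_empty hA')
    exact huniq A' hA' ⟨⟨hdisj', hout'⟩, hne1', hne2'⟩
  · by_cases hBΓ : B ∈ Γ
    · obtain ⟨⟨hdisj, hin⟩, hiff⟩ := hpass B hBΓ hB
      exact ⟨hdisj, hin, hiff⟩
    · simp [g1.hat_eq_empty hBΓ, g2.hat_eq_empty hBΓ]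

end WellTyped

theorem Typing.exists_gsem_wellTyped [Nonempty P] [Nonempty M] {Γ : Set P} {G : GC P M}
    {φ Λ : Set (Label P M)} (h : Typing Γ G φ Λ) : ∃ E, gsem G = some E ∧ WellTyped E Γ φ := by
  induction h with
  | temp => exact ⟨esEmpty, rfl, wellTyped_esEmpty⟩
  | tint hab => exact ⟨esAct _ _ _, by simp [gsem, hab], wellTyped_esAct hab⟩
  | tseq _ _ ih1 ih2 =>
    obtain ⟨E1, hE1, g1⟩ := ih1
    obtain ⟨E2, hE2, g2⟩ := ih2
    exact ⟨esSeq E1 E2, by simp [gsem, hE1, hE2], g1.esSeq g2⟩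
  | tpar _ _ hΓ ih1 ih2 =>
    obtain ⟨E1, hE1, g1⟩ := ih1
    obtain ⟨E2, hE2, g2⟩ := ih2
    exact ⟨esTensor E1 E2, by simp [gsem, hE1, hE2, g1.disjoint_lblSet g2 hΓ], g1.esTensor g2⟩
  | tch _ _ hc ih1 ih2 =>
    obtain ⟨E1, hE1, g1⟩ := ih1
    obtain ⟨E2, hE2, g2⟩ := ih2
    exact ⟨esSum E1 E2, by simp [gsem, hE1, hE2, g1.wb_of_compch g2 hc], g1.esSum g2⟩

/-- Projections of sequential compositions of typable g-choreographies: the minimal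
labels of `⟦G1;G2⟧↾A` come from `⟦G1⟧↾A` if `A ∈ Π1` and from `⟦G2⟧↾A` otherwise;
dually for the maximal labels. -/
theorem seq_projections {P M : Type} [Infinite P] [Infinite M]
    {Γ1 Γ2 : Set P} {G1 G2 : GC P M} {φ1 φ2 Λ1 Λ2 : Set (Label P M)}
    (h1 : Typing Γ1 G1 φ1 Λ1) (h2 : Typing Γ2 G2 φ2 Λ2) :
    ∃ E1 E2 : ES P M, gsem G1 = some E1 ∧ gsem G2 = some E2 ∧
      gsem (GC.seq G1 G2) = some (esSeq E1 E2) ∧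
      ∀ A ∈ Γ1 ∪ Γ2,
        (A ∈ Γ1 → ((esSeq E1 E2).proj A).minLbl = (E1.proj A).minLbl) ∧
        (A ∉ Γ1 → ((esSeq E1 E2).proj A).minLbl = (E2.proj A).minLbl) ∧
        (A ∈ Γ2 → ((esSeq E1 E2).proj A).maxLbl = (E2.proj A).maxLbl) ∧
        (A ∉ Γ2 → ((esSeq E1 E2).proj A).maxLbl = (E1.proj A).maxLbl) := by
  obtain ⟨E1, hE1, g1⟩ := h1.exists_gsem_wellTyped
  obtain ⟨E2, hE2, g2⟩ := h2.exists_gsem_wellTyped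
  refine ⟨E1, E2, hE1, hE2, by simp [gsem, hE1, hE2], fun A _ => ⟨fun hA => ?_, fun hA => ?_,
    fun hA => ?_, fun hA => ?_⟩⟩
  · exact esSeq_minLbl_proj_of_involves fun x hx => g1.involves x hx A hA
  · exact esSeq_minLbl_proj_of_not_mem (g1.sbj_ne hA) (ES.MaxC_nonempty g1.finite)
  · obtain ⟨y, hy⟩ := ES.MaxC_nonempty g2.finite
    obtain ⟨f, hf, hfA⟩ := g2.involves y hy A hA
    exact esSeq_maxLbl_proj_of_mem ⟨f, hy.1.1 hf, hfA⟩
      (fun e he => g1.prime.exists_MaxC_mem g1.finite he) (ES.MaxC_nonempty g1.finite)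
  · exact esSeq_maxLbl_proj_of_not_mem (g2.sbj_ne hA)

end Choreo
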